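/- Let g : ℕ → ℝ≥0 satisfy liminf_{k→∞} g(q₀k)^{1/k} ≥ 1 for every q₀ ∈ ℕ. Suppose ξ ∈ ℝ satisfies |ξ − p/q| ≥ g(q) for all p ∈ ℤ, q ∈ ℕ. Let β = e^{2πiξ} and λ = e^{2πir} with r = p₀/q₀ ∈ ℚ, λ ≠ 1. Then limsup_{k→∞} (1/|β^k − λ|)^{1/k} ≤ 1. -/

import Mathlib

/-! With `r = p₀ / q₀`, `‖β ^ k - λ‖ = ‖exp (2πi(kξ - r)) - 1‖ ≥ 4 |kξ - r - p|` for the integer `p`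
nearest to `kξ - r` (Jordan's inequality), and `kξ - r - p = k (ξ - (p₀ + p q₀) / (q₀ k))`, so the
Diophantine hypothesis gives `‖β ^ k - λ‖ ≥ 4k g(q₀ k) ≥ g(q₀ k)`. Taking `k`-th roots,
`limsup (1 / ‖β ^ k - λ‖) ^ (1 / k) ≤ (liminf g(q₀ k) ^ (1 / k))⁻¹ ≤ 1`. -/

open Filter Complex
open scoped Real

lemma four_mul_abs_le_norm_exp_sub_one {t : ℝ} (ht : |t| ≤ 1 / 2) :
    4 * |t| ≤ ‖exp (2 * π * I * t) - 1‖ := by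
  have hπt : |π * t| ≤ π / 2 := by
    rw [abs_mul, abs_of_pos Real.pi_pos]; linarith [mul_le_mul_of_nonneg_left ht Real.pi_pos.le]
  have hsin := Real.mul_abs_le_abs_sin hπt
  rw [show 2 * π * I * t = I * ((2 * π * t : ℝ) : ℂ) by push_cast; ring,
    norm_exp_I_mul_ofReal_sub_one, norm_mul, Real.norm_two, Real.norm_eq_abs,
    show 2 * π * t / 2 = π * t by ring]
  rw [abs_mul, abs_of_pos Real.pi_pos] at hsin
  field_simp at hsin
  linarith

lemma exp_two_pi_mul_I_sub_intCast (x : ℝ) (n : ℤ) :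
    exp (2 * π * I * ((x - n : ℝ) : ℂ)) = exp (2 * π * I * x) := by
  rw [show 2 * π * I * ((x - n : ℝ) : ℂ) = 2 * π * I * x - n * (2 * π * I) by push_cast; ring,
    exp_sub, exp_int_mul_two_pi_mul_I, div_one]

lemma four_mul_abs_sub_round_le_norm_exp_sub_one (x : ℝ) :
    4 * |x - round x| ≤ ‖exp (2 * π * I * x) - 1‖ := by
  simpa only [exp_two_pi_mul_I_sub_intCast] using
    four_mul_abs_le_norm_exp_sub_one (abs_sub_round x)

lemma norm_exp_pow_sub_exp (ξ r : ℝ) (k : ℕ) :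
    ‖exp (2 * π * I * ξ) ^ k - exp (2 * π * I * r)‖
      = ‖exp (2 * π * I * ((k * ξ - r : ℝ) : ℂ)) - 1‖ := by
  have hr : ‖exp (2 * π * I * r)‖ = 1 := by
    rw [show 2 * π * I * r = ((2 * π * r : ℝ) : ℂ) * I by push_cast; ring, norm_exp_ofReal_mul_I]
  rw [← one_mul ‖exp _ - 1‖, ← hr, ← norm_mul, mul_sub, mul_one, ← exp_add, ← exp_nat_mul]
  congr 3
  push_cast; ring

lemma mul_le_abs_mul_sub_div_sub_intCast (g : ℕ → ℝ) (ξ : ℝ)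
    (hξ : ∀ p : ℤ, ∀ q : ℕ, 0 < q → g q ≤ |ξ - p / q|)
    (p₀ : ℤ) {q₀ k : ℕ} (hq₀ : 0 < q₀) (hk : 0 < k) (p : ℤ) :
    k * g (q₀ * k) ≤ |k * ξ - p₀ / q₀ - p| := by
  have hq₀' : (q₀ : ℝ) ≠ 0 := by positivity
  have hk' : (0 : ℝ) < k := by exact_mod_cast hk
  have hscale : k * ξ - p₀ / q₀ - p = k * (ξ - ((p₀ + p * q₀ : ℤ) : ℝ) / ((q₀ * k : ℕ) : ℝ)) := by
    push_cast
    field_simp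
    ring
  rw [hscale, abs_mul, abs_of_pos hk']
  exact mul_le_mul_of_nonneg_left (hξ _ _ (by positivity)) hk'.le

lemma limsup_le_one_of_le_inv {ι : Type*} {l : Filter ι} [l.NeBot] {a b : ι → ℝ}
    (ha : ∀ i, 0 ≤ a i) (hb : ∀ i, 0 ≤ b i) (hab : ∀ᶠ i in l, 0 < a i → b i ≤ (a i)⁻¹)
    (hlim : 1 ≤ liminf a l) : limsup b l ≤ 1 := by
  refine le_of_forall_gt_imp_ge_of_dense fun c hc => ?_
  have hc₀ : 0 < c := one_pos.trans hc
  have hac : ∀ᶠ i in l, c⁻¹ < a i :=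
    eventually_lt_of_lt_liminf ((inv_lt_one_of_one_lt₀ hc).trans_le hlim)
      (isBoundedUnder_of_eventually_ge (Eventually.of_forall ha))
  refine limsup_le_of_le (isCoboundedUnder_le_of_le l hb) ?_
  filter_upwards [hab, hac] with i hi hci
  have ha₀ : 0 < a i := (inv_pos.2 hc₀).trans hci
  exact (hi ha₀).trans ((inv_lt_comm₀ hc₀ ha₀).1 hci).le

lemma four_mul_mul_le_norm_exp_pow_sub_exp (g : ℕ → ℝ) (ξ : ℝ)
    (hξ : ∀ p : ℤ, ∀ q : ℕ, 0 < q → g q ≤ |ξ - p / q|)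
    (p₀ : ℤ) {q₀ k : ℕ} (hq₀ : 0 < q₀) (hk : 0 < k) :
    4 * (k * g (q₀ * k)) ≤ ‖exp (2 * π * I * ξ) ^ k - exp (2 * π * I * ((p₀ : ℝ) / q₀))‖ := by
  rw [show ((p₀ : ℝ) : ℂ) / q₀ = (((p₀ : ℝ) / q₀ : ℝ) : ℂ) by push_cast; rfl,
    norm_exp_pow_sub_exp]
  refine le_trans ?_ (four_mul_abs_sub_round_le_norm_exp_sub_one _)
  gcongr
  exact mul_le_abs_mul_sub_div_sub_intCast g ξ hξ p₀ hq₀ hk _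

theorem stmt_13_general (g : ℕ → ℝ) (hg0 : ∀ q, 0 ≤ g q)
    (hliminf : ∀ q₀ : ℕ, 0 < q₀ →
      1 ≤ Filter.liminf (fun k : ℕ => (g (q₀ * k)) ^ ((1:ℝ)/k)) atTop)
    (ξ : ℝ) (hξ : ∀ p : ℤ, ∀ q : ℕ, 0 < q → g q ≤ |ξ - p / q|)
    (p₀ : ℤ) (q₀ : ℕ) (hq₀ : 0 < q₀)
    (lam : ℂ) (hlam : lam = Complex.exp (2 * Real.pi * Complex.I * ((p₀ : ℝ) / q₀)))
    (β : ℂ) (hβ : β = Complex.exp (2 * Real.pi * Complex.I * ξ)) :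
    Filter.limsup (fun k : ℕ => (1 / ‖β ^ k - lam‖) ^ ((1:ℝ)/k)) atTop ≤ 1 := by
  refine limsup_le_one_of_le_inv (fun k => Real.rpow_nonneg (hg0 _) _)
    (fun k => Real.rpow_nonneg (by positivity) _) ?_ (hliminf q₀ hq₀)
  filter_upwards [eventually_gt_atTop 0] with k hk hpos
  have hg : 0 < g (q₀ * k) := (hg0 _).lt_of_ne fun h => hpos.ne' <| by
    rw [← h, Real.zero_rpow (one_div_ne_zero (by exact_mod_cast hk.ne'))]
  have hgk : g (q₀ * k) ≤ ‖β ^ k - lam‖ := by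
    have h := four_mul_mul_le_norm_exp_pow_sub_exp g ξ hξ p₀ hq₀ hk
    have hk1 : (1 : ℝ) ≤ k := by exact_mod_cast hk
    rw [← hβ, ← hlam] at h
    nlinarith
  calc (1 / ‖β ^ k - lam‖) ^ ((1 : ℝ) / k)
      ≤ (1 / g (q₀ * k)) ^ ((1 : ℝ) / k) := by gcongr
    _ = (g (q₀ * k) ^ ((1 : ℝ) / k))⁻¹ := by rw [one_div, Real.inv_rpow hg.le]

theorem stmt_13 (g : ℕ → ℝ) (hg0 : ∀ q, 0 ≤ g q)
    (hliminf : ∀ q₀ : ℕ, 0 < q₀ →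
      1 ≤ Filter.liminf (fun k : ℕ => (g (q₀ * k)) ^ ((1:ℝ)/k)) atTop)
    (ξ : ℝ) (hξ : ∀ p : ℤ, ∀ q : ℕ, 0 < q → g q ≤ |ξ - p / q|)
    (p₀ : ℤ) (q₀ : ℕ) (hq₀ : 0 < q₀)
    (lam : ℂ) (hlam : lam = Complex.exp (2 * Real.pi * Complex.I * ((p₀ : ℝ) / q₀)))
    (hlam1 : lam ≠ 1)
    (β : ℂ) (hβ : β = Complex.exp (2 * Real.pi * Complex.I * ξ)) :
    Filter.limsup (fun k : ℕ => (1 / ‖β ^ k - lam‖) ^ ((1:ℝ)/k)) atTop ≤ 1 :=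
  stmt_13_general g hg0 hliminf ξ hξ p₀ q₀ hq₀ lam hlam β hβ
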